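/- Standardization is injective on Q-tableaux of a fixed shape with fixed content: if S and S' are Q-tableaux of shape ν/μ with the same multiset of entries and stand(S) = stand(S'), then S = S'. -/

import Mathlib

/-- `θ : ℕ → ℕ` is a strict partition of length `k`. -/
def StrictShape (θ : ℕ → ℕ) (k : ℕ) : Prop :=
  (∀ i, 0 < θ i ↔ i < k) ∧ ∀ i, i + 1 < k → θ (i + 1) < θ i

/-- Box `(i, j)` (0-indexed row, column) of the shifted Young diagram of `θ`:
row `i` occupies columns `i, …, i + θ i - 1`. -/
def ShiftedCell (θ : ℕ → ℕ) (p : ℕ × ℕ) : Prop :=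
  p.1 ≤ p.2 ∧ p.2 < p.1 + θ p.1

/-- Box of the skew shifted diagram `θ/η`. -/
def SkewCell (θ η : ℕ → ℕ) (p : ℕ × ℕ) : Prop :=
  ShiftedCell θ p ∧ ¬ ShiftedCell η p

/-- A letter of the doubled alphabet: an integer value together with a
decoration (`false` = low/underlined ū, `true` = high/overlined ō). -/
abbrev Letter := ℕ × Bool

/-- The order ū1 < ō1 < ū2 < ō2 < ⋯ on the doubled alphabet (non-strict). -/
def lle (a b : Letter) : Prop :=
  a.1 < b.1 ∨ (a.1 = b.1 ∧ (a.2 = true → b.2 = true))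

/-- The order ū1 < ō1 < ū2 < ō2 < ⋯ on the doubled alphabet (strict). -/
def llt (a b : Letter) : Prop :=
  a.1 < b.1 ∨ (a.1 = b.1 ∧ a.2 = false ∧ b.2 = true)

/-- `T` is a semistandard shifted tableau on the set of boxes `Cell`: positive
entries, weakly increasing rows and columns, no low entry on the diagonal,
at most one high `ōi` per column, at most one low `ūj` per row. -/
def IsSSYT (Cell : ℕ × ℕ → Prop) (T : ℕ × ℕ → Letter) : Prop :=
  (∀ p, Cell p → 0 < (T p).1) ∧
  (∀ p q, Cell p → Cell q → p.1 = q.1 → p.2 < q.2 → lle (T p) (T q)) ∧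
  (∀ p q, Cell p → Cell q → p.2 = q.2 → p.1 < q.1 → lle (T p) (T q)) ∧
  (∀ p, Cell p → p.1 = p.2 → (T p).2 = true) ∧
  (∀ p q, Cell p → Cell q → p.2 = q.2 → T p = T q → (T p).2 = true → p = q) ∧
  (∀ p q, Cell p → Cell q → p.1 = q.1 → T p = T q → (T p).2 = false → p = q)

/-- `F`: raise every diagonal entry to high. -/
def raiseDiag (T : ℕ × ℕ → Letter) : ℕ × ℕ → Letter :=
  fun p => if p.1 = p.2 then ((T p).1, true) else T p

/-- A `Q`-tableau: diagonal entries may be low or high, but raising every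
diagonal entry to high yields a semistandard tableau. -/
def IsQTab (Cell : ℕ × ℕ → Prop) (T : ℕ × ℕ → Letter) : Prop :=
  IsSSYT Cell (raiseDiag T)

/-- Fillings take a fixed junk value outside the shape (so tableaux of a
given shape can be counted as functions). -/
def JunkOutside (Cell : ℕ × ℕ → Prop) (T : ℕ × ℕ → Letter) : Prop :=
  ∀ p, ¬ Cell p → T p = (0, true)

/-- Tie-breaking order on positions of equal entries used by standardization:
equal high entries `ōa` are listed north-to-south (then west-to-east), equal
low entries `ūa` west-to-east (then north-to-south). `tieBefore T q p` says
the entry at `q` is listed before the (equal) entry at `p`. -/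
def tieBefore (T : ℕ × ℕ → Letter) (q p : ℕ × ℕ) : Prop :=
  ((T p).2 = true ∧ (q.1 < p.1 ∨ (q.1 = p.1 ∧ q.2 < p.2))) ∨
  ((T p).2 = false ∧ (q.2 < p.2 ∨ (q.2 = p.2 ∧ q.1 < p.1)))

/-- The (0-indexed) position of the entry of `T` at box `p` in the weakly
increasing listing of all entries of `T`, ties broken by `tieBefore`.  The
standardization `stand T` replaces the entry at `p` by `ū(standRank p + 1)`. -/
noncomputable def standRank (Cell : ℕ × ℕ → Prop) (T : ℕ × ℕ → Letter)
    (p : ℕ × ℕ) : ℕ :=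
  {q | Cell q ∧ (llt (T q) (T p) ∨ (T q = T p ∧ tieBefore T q p))}.ncard

/-!
Standardization records, for each box, the position of its entry in a total listing of all
entries. The boxes holding entries strictly below `a` occupy an initial segment of that listing,
whose length depends only on the content; the box `p` holding `a` is listed after that segment and
before every entry above `a`. So if `S p < S' p`, the rank of `p` in `S` is smaller than the number
of entries of `S'` below `S' p`, hence smaller than its rank in `S'`.
-/

open Finset

section Listing

open scoped Classical

variable {α β : Type*} (r : β → β → Prop) (C : Finset α)

noncomputable def listingRank (T : α → β) (tie : α → α → Prop) (p : α) : ℕ :=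
  #{q ∈ C | r (T q) (T p) ∨ T q = T p ∧ tie q p}

lemma card_filter_comp_eq_of_map_eq {S S' : α → β} (h : C.val.map S = C.val.map S')
    (P : β → Prop) : #{q ∈ C | P (S q)} = #{q ∈ C | P (S' q)} := by
  have hcount := congrArg (Multiset.countP P) h
  rwa [Multiset.countP_map, Multiset.countP_map] at hcount

lemma card_filter_lt_le_listingRank (T : α → β) (tie : α → α → Prop) (p : α) :
    #{q ∈ C | r (T q) (T p)} ≤ listingRank r C T tie p :=
  card_le_card (monotone_filter_right C fun _ _ h => Or.inl h)

variable {r} [IsStrictTotalOrder β r] {C}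

lemma listingRank_lt_card_filter_le {T : α → β} {tie : α → α → Prop} {p : α} (hp : p ∈ C)
    (htie : ¬ tie p p) : listingRank r C T tie p < #{q ∈ C | r (T q) (T p) ∨ T q = T p} := by
  refine card_lt_card (ssubset_iff_of_subset ?_ |>.mpr ⟨p, ?_, ?_⟩)
  · exact monotone_filter_right C fun _ _ h => h.imp_right And.left
  · simp [hp]
  · simp [irrefl, htie]

lemma card_filter_le_le_card_filter_lt (T : α → β) {a b : β} (hab : r a b) :
    #{q ∈ C | r (T q) a ∨ T q = a} ≤ #{q ∈ C | r (T q) b} := by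
  refine card_le_card (monotone_filter_right C fun q _ h => ?_)
  rcases h with h | h
  · exact _root_.trans h hab
  · exact h ▸ hab

lemma listingRank_lt_of_lt {S S' : α → β} (h : C.val.map S = C.val.map S')
    {tie tie' : α → α → Prop} {p : α} (hp : p ∈ C) (htie : ¬ tie p p)
    (hlt : r (S p) (S' p)) : listingRank r C S tie p < listingRank r C S' tie' p :=
  calc listingRank r C S tie p
      < #{q ∈ C | r (S q) (S p) ∨ S q = S p} := listingRank_lt_card_filter_le hp htie
    _ ≤ #{q ∈ C | r (S q) (S' p)} := card_filter_le_le_card_filter_lt S hlt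
    _ = #{q ∈ C | r (S' q) (S' p)} := card_filter_comp_eq_of_map_eq C h (r · (S' p))
    _ ≤ listingRank r C S' tie' p := card_filter_lt_le_listingRank r C S' tie' p

theorem eq_of_listingRank_eq {S S' : α → β} (h : C.val.map S = C.val.map S')
    {tie tie' : α → α → Prop} {p : α} (hp : p ∈ C) (htie : ¬ tie p p) (htie' : ¬ tie' p p)
    (hrank : listingRank r C S tie p = listingRank r C S' tie' p) : S p = S' p := by
  rcases trichotomous (r := r) (S p) (S' p) with hlt | heq | hgt
  · exact absurd hrank (listingRank_lt_of_lt h hp htie hlt).ne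
  · exact heq
  · exact absurd hrank (listingRank_lt_of_lt h.symm hp htie' hgt).ne'

end Listing

instance : IsStrictTotalOrder Letter llt where
  irrefl a := by simp [llt]
  trans a b c := by
    rintro (hab | ⟨hab, -, hb⟩) (hbc | ⟨hbc, hb', hc⟩)
    · exact Or.inl (hab.trans hbc)
    · exact Or.inl (hbc ▸ hab)
    · exact Or.inl (hab ▸ hbc)
    · simp [hb] at hb'
  trichotomous a b hab hba := by
    obtain ⟨a₁, a₂⟩ := a
    obtain ⟨b₁, b₂⟩ := b
    simp only [llt, not_or, not_and] at hab hba
    obtain rfl : a₁ = b₁ := by omega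
    cases a₂ <;> cases b₂ <;> simp_all

lemma not_tieBefore_self (T : ℕ × ℕ → Letter) (p : ℕ × ℕ) : ¬ tieBefore T p p := by
  rintro (⟨_, h | ⟨_, h⟩⟩ | ⟨_, h | ⟨_, h⟩⟩) <;> omega

lemma StrictShape.apply_le_apply_zero {θ : ℕ → ℕ} {k : ℕ} (hθ : StrictShape θ k) (i : ℕ) :
    θ i ≤ θ 0 := by
  induction i with
  | zero => rfl
  | succ i ih =>
    by_cases hi : i + 1 < k
    · exact (hθ.2 i hi).le.trans ih
    · have : ¬ 0 < θ (i + 1) := fun h => hi ((hθ.1 _).mp h)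
      omega

lemma StrictShape.finite_shiftedCell {θ : ℕ → ℕ} {k : ℕ} (hθ : StrictShape θ k) :
    {p | ShiftedCell θ p}.Finite := by
  refine ((Set.finite_Iio k).prod (Set.finite_Iio (k + θ 0))).subset ?_
  rintro ⟨i, j⟩ ⟨hij : i ≤ j, hj : j < i + θ i⟩
  have hi : i < k := (hθ.1 i).mp (by omega)
  have := hθ.apply_le_apply_zero i
  simp only [Set.mem_prod, Set.mem_Iio]
  omega

section FiniteShape

variable {Cell : ℕ × ℕ → Prop} {C : Finset (ℕ × ℕ)}

open scoped Classical in
lemma standRank_eq_listingRank (hC : ∀ q, q ∈ C ↔ Cell q) (T : ℕ × ℕ → Letter) (p : ℕ × ℕ) :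
    standRank Cell T p = listingRank llt C T (tieBefore T) p := by
  rw [standRank, listingRank, ← Set.ncard_coe_finset, coe_filter]
  simp only [hC]

lemma map_val_eq_of_ncard_eq (hC : ∀ q, q ∈ C ↔ Cell q) {S S' : ℕ × ℕ → Letter}
    (hcontent : ∀ a : Letter, {p | Cell p ∧ S p = a}.ncard = {p | Cell p ∧ S' p = a}.ncard) :
    C.val.map S = C.val.map S' := by
  refine Multiset.ext.mpr fun a => ?_
  have hfiber (T : ℕ × ℕ → Letter) : (C.val.map T).count a = {p | Cell p ∧ T p = a}.ncard := by
    rw [Multiset.count_map]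
    change #{q ∈ C | a = T q} = _
    rw [← Set.ncard_coe_finset, coe_filter]
    simp only [hC, eq_comm]
  rw [hfiber, hfiber, hcontent]

end FiniteShape

theorem standardization_injective_general (θ η : ℕ → ℕ) (k : ℕ)
    (hθ : StrictShape θ k)
    (S S' : ℕ × ℕ → Letter)
    (hsupp : JunkOutside (SkewCell θ η) S) (hsupp' : JunkOutside (SkewCell θ η) S')
    (hcontent : ∀ a : Letter,
      {p | SkewCell θ η p ∧ S p = a}.ncard = {p | SkewCell θ η p ∧ S' p = a}.ncard)
    (hstand : ∀ p, SkewCell θ η p →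
      standRank (SkewCell θ η) S p = standRank (SkewCell θ η) S' p) :
    S = S' := by
  set C := (hθ.finite_shiftedCell.subset fun _ (hp : SkewCell θ η _) => hp.1).toFinset
  have hC (q : ℕ × ℕ) : q ∈ C ↔ SkewCell θ η q := Set.Finite.mem_toFinset _
  funext p
  by_cases hp : SkewCell θ η p
  · refine eq_of_listingRank_eq (r := llt) (map_val_eq_of_ncard_eq hC hcontent) ((hC p).mpr hp)
      (not_tieBefore_self S p) (not_tieBefore_self S' p) ?_
    rw [← standRank_eq_listingRank hC, ← standRank_eq_listingRank hC]
    exact hstand p hp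
  · rw [hsupp p hp, hsupp' p hp]

/-- Standardization is injective on Q-tableaux of a fixed skew shifted shape
with a fixed multiset of entries. -/
theorem standardization_injective (θ η : ℕ → ℕ) (k m : ℕ)
    (hθ : StrictShape θ k) (hη : StrictShape η m) (hle : ∀ i, η i ≤ θ i)
    (S S' : ℕ × ℕ → Letter)
    (hS : IsQTab (SkewCell θ η) S) (hS' : IsQTab (SkewCell θ η) S')
    (hsupp : JunkOutside (SkewCell θ η) S) (hsupp' : JunkOutside (SkewCell θ η) S')
    (hcontent : ∀ a : Letter,
      {p | SkewCell θ η p ∧ S p = a}.ncard = {p | SkewCell θ η p ∧ S' p = a}.ncard)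
    (hstand : ∀ p, SkewCell θ η p →
      standRank (SkewCell θ η) S p = standRank (SkewCell θ η) S' p) :
    S = S' :=
  standardization_injective_general θ η k hθ S S' hsupp hsupp' hcontent hstand
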